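/- Let n be a composite number and let Z_n be the cyclic group of order n. The adjacency spectral radius of the strong power graph P_s(Z_n), i.e., the largest root of the characteristic polynomial of its adjacency matrix, equals (n - 3 + 2cos(θ/3)·√(n^2 - 3φ(n)))/3, where 0 < θ < π/2 and θ = arccos( (2n^3 + 27φ(n)^2 + 27φ(n) - 36nφ(n)) / (2√((n^2 - 3φ(n))^3)) ), with φ Euler's totient function. -/

import Mathlib

/-- The strong power graph of the cyclic group `ZMod n` (written additively):
two distinct vertices `x` and `y` are adjacent iff `a • x = b • y` for some
positive integers `a, b < n`. -/
def strongPowerGraphZ (n : ℕ) : SimpleGraph (ZMod n) where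
  Adj x y := x ≠ y ∧ ∃ a b : ℕ, 0 < a ∧ a < n ∧ 0 < b ∧ b < n ∧ a • x = b • y
  symm := by
    constructor
    rintro x y ⟨h, a, b, ha, ha', hb, hb', hab⟩
    exact ⟨h.symm, b, a, hb, hb', ha, ha', hab.symm⟩
  loopless := by
    constructor
    rintro x ⟨h, -⟩
    exact h rfl

/-- The distance matrix (with real entries) of the strong power graph of `ZMod n`. -/
noncomputable def distMatrixZ (n : ℕ) [NeZero n] : Matrix (ZMod n) (ZMod n) ℝ :=
  Matrix.of fun i j => ((strongPowerGraphZ n).dist i j : ℝ)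

open Classical in
/-- The adjacency matrix (with real entries) of the strong power graph of `ZMod n`. -/
noncomputable def adjMatrixZ (n : ℕ) [NeZero n] : Matrix (ZMod n) (ZMod n) ℝ :=
  Matrix.of fun i j => if (strongPowerGraphZ n).Adj i j then 1 else 0

/-!
The strong power graph of `ZMod n` is the complete graph with the edges between `0` and the
units removed: a non-unit is killed by a proper multiple, a nonzero element is a proper multiple
of any unit, and no proper multiple of a unit vanishes. So `A + 1 = C.submatrix f f`, where `f`
sends `z` to its block among `{0}`, the units and the nonzero non-units, and `C` is the `3 × 3`
pattern of which blocks meet. Writing `C.submatrix f f = P * (C * Pᵀ)` with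
`Pᵀ * P = diag(1, φ, n - 1 - φ)`, and using that `PQ` and `QP` have the same nonzero
eigenvalues, the eigenvalues `x ≠ -1` of `A` are the roots of `y³ - n y² + φ y + φ (n - 1 - φ)`
at `y = x + 1`. With `u = 3y - n` this is the depressed cubic `u³ - 3Du = N`, where
`D = n² - 3φ` and `N = 2n³ + 27φ² + 27φ - 36nφ`, whose largest root is `2 cos(θ/3) √D` (Viète).
For composite `n` we have `2 ≤ φ ≤ n - 2`, which gives `0 < N < 2 √(D³)`, i.e. `0 < θ < π/2`.
-/

open Matrix Polynomial Finset Real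

theorem isGreatest_depressed_cubic {D N : ℝ} (hD : 0 < D) (hN : N ^ 2 ≤ 4 * D ^ 3) :
    IsGreatest {u : ℝ | u ^ 3 - 3 * D * u = N}
      (2 * cos (arccos (N / (2 * √(D ^ 3))) / 3) * √D) := by
  set s := √D
  have hs : 0 < s := sqrt_pos.2 hD
  have hs2 : s ^ 2 = D := sq_sqrt hD.le
  have hs3 : √(D ^ 3) = s ^ 3 := by
    rw [← hs2, show (s ^ 2) ^ 3 = (s ^ 3) ^ 2 by ring, sqrt_sq (by positivity)]
  rw [hs3]
  set θ := arccos (N / (2 * s ^ 3))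
  have hNs : -(2 * s ^ 3) ≤ N ∧ N ≤ 2 * s ^ 3 :=
    abs_le_of_sq_le_sq' (by rw [← hs2] at hN; linear_combination hN) (by positivity)
  have hcos : cos θ = N / (2 * s ^ 3) :=
    cos_arccos (by rw [le_div_iff₀ (by positivity)]; linarith)
      (by rw [div_le_one (by positivity)]; linarith)
  have hroot : (2 * cos (θ / 3) * s) ^ 3 - 3 * D * (2 * cos (θ / 3) * s) = N := by
    have h3 : cos θ = 4 * cos (θ / 3) ^ 3 - 3 * cos (θ / 3) := by
      rw [← cos_three_mul]; ring_nf
    rw [hcos, div_eq_iff (by positivity)] at h3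
    rw [← hs2]
    linear_combination -h3
  -- `θ / 3 ∈ [0, π / 3]`, so the root is at least `√D`; beyond it the cubic is increasing.
  have hhalf : 1 / 2 ≤ cos (θ / 3) := by
    rw [← cos_pi_div_three]
    exact cos_le_cos_of_nonneg_of_le_pi (div_nonneg (arccos_nonneg _) zero_le_three)
      (by linarith [pi_pos]) (by linarith [arccos_le_pi (N / (2 * s ^ 3))])
  refine ⟨hroot, fun u (hu : u ^ 3 - 3 * D * u = N) => not_lt.1 fun hlt => ?_⟩
  have hu₀ : s ≤ 2 * cos (θ / 3) * s := by nlinarith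
  have : 0 < (u - 2 * cos (θ / 3) * s) *
      (u ^ 2 + u * (2 * cos (θ / 3) * s) + (2 * cos (θ / 3) * s) ^ 2 - 3 * D) :=
    mul_pos (by linarith) (by nlinarith)
  nlinarith

theorem cubic_numerator_pos {x u : ℝ} (hu : 2 ≤ u) (hux : u ≤ x - 2) :
    0 < 2 * x ^ 3 + 27 * u ^ 2 + 27 * u - 36 * x * u := by
  nlinarith [sq_nonneg (x - 3 * u), sq_nonneg (x - 2 * u), sq_nonneg (x - u),
    mul_nonneg (by linarith : (0:ℝ) ≤ u - 2) (by linarith : (0:ℝ) ≤ x - 2 - u),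
    mul_pos (by linarith : (0:ℝ) < x) (by linarith : (0:ℝ) < u), sq_nonneg (2 * x - 3 * u)]

theorem cubic_numerator_sq_lt {x u : ℝ} (hu : 2 ≤ u) (hux : u ≤ x - 2) :
    (2 * x ^ 3 + 27 * u ^ 2 + 27 * u - 36 * x * u) ^ 2 < 4 * (x ^ 2 - 3 * u) ^ 3 := by
  have h1 : 0 ≤ (u - 2) * (x - 2 - u) := mul_nonneg (by linarith) (by linarith)
  nlinarith [sq_nonneg (x - u), sq_nonneg (x - 2 * u), sq_nonneg (u - 2), sq_nonneg (x - u - 2),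
    sq_nonneg (x * u - 3 * u), sq_nonneg (x ^ 2 - 3 * u),
    mul_nonneg h1 (by linarith : (0:ℝ) ≤ x), mul_nonneg h1 (by linarith : (0:ℝ) ≤ u),
    mul_pos (by linarith : (0:ℝ) < x) (by linarith : (0:ℝ) < u)]

theorem arccos_cubic_ratio_mem_Ioo {x u : ℝ} (hu : 2 ≤ u) (hux : u ≤ x - 2) :
    0 < arccos ((2 * x ^ 3 + 27 * u ^ 2 + 27 * u - 36 * x * u) / (2 * √((x ^ 2 - 3 * u) ^ 3)))
      ∧ arccos ((2 * x ^ 3 + 27 * u ^ 2 + 27 * u - 36 * x * u) / (2 * √((x ^ 2 - 3 * u) ^ 3)))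
        < π / 2 := by
  have hN := cubic_numerator_pos hu hux
  have hdisc := cubic_numerator_sq_lt hu hux
  have hD : 0 < x ^ 2 - 3 * u := by nlinarith
  refine ⟨arccos_pos.2 ?_, arccos_lt_pi_div_two.2 (by positivity)⟩
  rw [div_lt_one (by positivity)]
  refine lt_of_pow_lt_pow_left₀ 2 (by positivity) ?_
  rwa [mul_pow, sq_sqrt (by positivity), show (2 : ℝ) ^ 2 = 4 by norm_num]

theorem Nat.two_le_totient {n : ℕ} (hn : 2 < n) : 2 ≤ n.totient := by
  obtain ⟨k, hk⟩ := Nat.totient_even hn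
  have := Nat.totient_pos.2 (by omega : 0 < n)
  omega

theorem Nat.totient_add_two_le_of_not_prime {n : ℕ} (hn : 1 < n) (hnp : ¬n.Prime) :
    n.totient + 2 ≤ n := by
  have hlt := Nat.totient_lt n hn
  have hne : n.totient ≠ n - 1 := fun h => hnp ((Nat.totient_eq_iff_prime (by omega)).1 h)
  omega

theorem Matrix.eval_charpoly_mul_comm_eq_zero_iff {m n K : Type*} [Fintype m] [DecidableEq m]
    [Fintype n] [DecidableEq n] [Field K] (A : Matrix m n K) (B : Matrix n m K) {y : K}
    (hy : y ≠ 0) : (A * B).charpoly.eval y = 0 ↔ (B * A).charpoly.eval y = 0 := by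
  have h := congrArg (eval y) (charpoly_mul_comm' A B)
  simp only [eval_mul, eval_pow, eval_X] at h
  constructor <;> intro h0
  · simpa [h0, hy] using h
  · simpa [h0, hy] using h.symm

theorem Matrix.submatrix_eq_one_submatrix_mul {ι κ K : Type*} [Fintype κ] [DecidableEq κ]
    [CommRing K] (M : Matrix κ κ K) (f : ι → κ) :
    M.submatrix f f
      = (1 : Matrix κ κ K).submatrix f id * (M * ((1 : Matrix κ κ K).submatrix f id)ᵀ) := by
  ext i j
  simp [mul_apply, one_apply]

theorem Matrix.transpose_one_submatrix_mul_self {ι κ K : Type*} [Fintype ι] [DecidableEq κ]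
    [CommRing K] (f : ι → κ) :
    ((1 : Matrix κ κ K).submatrix f id)ᵀ * (1 : Matrix κ κ K).submatrix f id
      = diagonal fun l => (#{i | f i = l} : K) := by
  ext l l'
  simp only [mul_apply, transpose_apply, submatrix_apply, id, one_apply, ite_mul, one_mul,
    zero_mul, ← ite_and, diagonal_apply]
  split_ifs with h
  · simp [h, sum_boole]
  · exact sum_eq_zero fun i _ => if_neg fun h' => h (h'.1.symm.trans h'.2)

theorem Matrix.eval_charpoly_submatrix_eq_zero_iff {ι κ K : Type*} [Fintype ι] [DecidableEq ι]
    [Fintype κ] [DecidableEq κ] [Field K] (M : Matrix κ κ K) (f : ι → κ) {y : K}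
    (hy : y ≠ 0) :
    (M.submatrix f f).charpoly.eval y = 0
      ↔ (M * diagonal fun l => (#{i | f i = l} : K)).charpoly.eval y = 0 := by
  rw [submatrix_eq_one_submatrix_mul, eval_charpoly_mul_comm_eq_zero_iff _ _ hy,
    Matrix.mul_assoc, transpose_one_submatrix_mul_self]

theorem Finset.sum_card_filter_fin_three {ι : Type*} [Fintype ι] (f : ι → Fin 3) :
    #{i | f i = 0} + #{i | f i = 1} + #{i | f i = 2} = Fintype.card ι := by
  have h := card_eq_sum_card_fiberwise (f := f) (s := univ) (t := univ) fun _ _ => mem_univ _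
  rwa [Fin.sum_univ_three, card_univ, eq_comm] at h

namespace ZMod

variable {n : ℕ}

theorem exists_nsmul_eq_zero_of_not_isUnit [NeZero n] {z : ZMod n} (hz : ¬IsUnit z) :
    ∃ b : ℕ, 0 < b ∧ b < n ∧ b • z = 0 := by
  have hn : n ≠ 0 := NeZero.ne n
  refine ⟨addOrderOf z, addOrderOf_pos z, ?_, addOrderOf_nsmul_eq_zero z⟩
  rw [← natCast_zmod_val z, addOrderOf_coe _ hn]
  have hgcd : n.gcd z.val ≠ 1 := fun h => hz <| by
    rw [← natCast_zmod_val z, isUnit_iff_coprime]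
    exact Nat.coprime_comm.1 h
  exact Nat.div_lt_self (Nat.pos_of_ne_zero hn)
    (lt_of_le_of_ne (Nat.gcd_pos_of_pos_left _ (Nat.pos_of_ne_zero hn)) (Ne.symm hgcd))

theorem exists_nsmul_eq_of_isUnit [NeZero n] {u x : ZMod n} (hu : IsUnit u) (hx : x ≠ 0) :
    ∃ c : ℕ, 0 < c ∧ c < n ∧ c • u = x := by
  refine ⟨(x * hu.unit⁻¹).val, Nat.pos_of_ne_zero ?_, val_lt _, ?_⟩
  · rw [Ne, val_eq_zero]
    simpa using hx
  · rw [nsmul_eq_mul, natCast_zmod_val, mul_assoc, IsUnit.val_inv_mul, mul_one]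

open Classical in
/-- The block of `z` in the partition of `ZMod n` into `{0}`, the units and the nonzero
non-units. -/
noncomputable def unitClass (z : ZMod n) : Fin 3 :=
  if z = 0 then 0 else if IsUnit z then 1 else 2

theorem unitClass_eq_zero_iff {z : ZMod n} : unitClass z = 0 ↔ z = 0 := by
  unfold unitClass
  split_ifs <;> simp_all

theorem unitClass_eq_one_iff [Fact (1 < n)] {z : ZMod n} : unitClass z = 1 ↔ IsUnit z := by
  unfold unitClass
  split_ifs with h0 <;> simp_all

theorem card_unitClass_eq_zero [NeZero n] : #{z : ZMod n | unitClass z = 0} = 1 := by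
  simp [unitClass_eq_zero_iff, filter_eq']

theorem card_unitClass_eq_one [NeZero n] [Fact (1 < n)] :
    #{z : ZMod n | unitClass z = 1} = n.totient := by
  have h : ({z : ZMod n | unitClass z = 1} : Finset _)
      = univ.map ⟨Units.val, Units.val_injective⟩ := by
    ext z
    simp [unitClass_eq_one_iff, IsUnit]
  rw [h, card_map, card_univ, card_units_eq_totient]

end ZMod

theorem strongPowerGraphZ_not_adj_zero {n : ℕ} {u : ZMod n} (hu : IsUnit u) :
    ¬(strongPowerGraphZ n).Adj 0 u := by
  rintro ⟨-, a, b, -, -, hb, hbn, hab⟩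
  rw [smul_zero, eq_comm, nsmul_eq_mul, hu.mul_left_eq_zero, ZMod.natCast_eq_zero_iff] at hab
  exact absurd (Nat.le_of_dvd hb hab) (by omega)

theorem strongPowerGraphZ_adj_iff {n : ℕ} [NeZero n] (hn : 1 < n) {x y : ZMod n} :
    (strongPowerGraphZ n).Adj x y ↔ x ≠ y ∧ ¬(x = 0 ∧ IsUnit y) ∧ ¬(y = 0 ∧ IsUnit x) := by
  refine ⟨fun h => ⟨h.1, ?_, ?_⟩, fun ⟨hxy, hx, hy⟩ => ?_⟩
  · rintro ⟨rfl, hy⟩; exact strongPowerGraphZ_not_adj_zero hy h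
  · rintro ⟨rfl, hx⟩; exact strongPowerGraphZ_not_adj_zero hx h.symm
  have adj_of_isUnit : ∀ {x y : ZMod n}, x ≠ y → x ≠ 0 → IsUnit y →
      (strongPowerGraphZ n).Adj x y := fun {x y} hxy hx0 hy => by
    obtain ⟨c, hc, hcn, rfl⟩ := ZMod.exists_nsmul_eq_of_isUnit hy hx0
    exact ⟨hxy, 1, c, one_pos, hn, hc, hcn, one_smul ..⟩
  by_cases hyu : IsUnit y
  · exact adj_of_isUnit hxy (fun h => hx ⟨h, hyu⟩) hyu
  by_cases hxu : IsUnit x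
  · exact (adj_of_isUnit (Ne.symm hxy) (fun h => hy ⟨h, hxu⟩) hxu).symm
  obtain ⟨a, ha, han, hax⟩ := ZMod.exists_nsmul_eq_zero_of_not_isUnit hxu
  obtain ⟨b, hb, hbn, hby⟩ := ZMod.exists_nsmul_eq_zero_of_not_isUnit hyu
  exact ⟨hxy, a, b, ha, han, hb, hbn, hax.trans hby.symm⟩

/-- Entry `(i, j)` records whether a vertex of block `i` is equal or adjacent to one of
block `j`. -/
def closedAdjPattern : Matrix (Fin 3) (Fin 3) ℝ := !![1, 0, 1; 0, 1, 1; 1, 1, 1]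

theorem eval_charpoly_closedAdjPattern_mul_diagonal (k : Fin 3 → ℝ) (y : ℝ) :
    (closedAdjPattern * diagonal k).charpoly.eval y
      = y ^ 3 - (k 0 + k 1 + k 2) * y ^ 2 + k 0 * k 1 * y + k 0 * k 1 * k 2 := by
  rw [eval_charpoly, det_fin_three]
  simp [closedAdjPattern, vecMul_diagonal]
  ring

theorem adjMatrixZ_eq {n : ℕ} [NeZero n] (hn : 1 < n) :
    adjMatrixZ n = closedAdjPattern.submatrix ZMod.unitClass ZMod.unitClass - 1 := by
  have : Fact (1 < n) := ⟨hn⟩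
  have h0 : ¬IsUnit (0 : ZMod n) := not_isUnit_zero
  ext i j
  simp only [adjMatrixZ, of_apply, strongPowerGraphZ_adj_iff hn, Matrix.sub_apply,
    submatrix_apply, one_apply, ZMod.unitClass]
  by_cases hij : i = j
  · subst hij
    by_cases hi0 : i = 0 <;> by_cases hu : IsUnit i <;> simp_all [closedAdjPattern]
  · by_cases hi0 : i = 0 <;> by_cases hiu : IsUnit i <;> by_cases hj0 : j = 0 <;>
      by_cases hju : IsUnit j <;> simp_all [closedAdjPattern]

theorem adjMatrixZ_eval_charpoly_eq_zero_iff {n : ℕ} [NeZero n] (hn : 1 < n) {x : ℝ}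
    (hx : x ≠ -1) :
    (adjMatrixZ n).charpoly.eval x = 0 ↔
      (x + 1) ^ 3 - n * (x + 1) ^ 2 + n.totient * (x + 1)
        + n.totient * (n - 1 - n.totient) = 0 := by
  have : Fact (1 < n) := ⟨hn⟩
  have hshift : (adjMatrixZ n).charpoly.eval x
      = (closedAdjPattern.submatrix (ZMod.unitClass (n := n)) ZMod.unitClass).charpoly.eval
          (x + 1) := by
    rw [eval_charpoly, eval_charpoly, adjMatrixZ_eq hn, map_add, map_one]
    abel_nf
  have hblocks : (1 : ℝ) + n.totient + #{z : ZMod n | z.unitClass = 2} = n := by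
    have h := Finset.sum_card_filter_fin_three (ZMod.unitClass (n := n))
    rw [ZMod.card_unitClass_eq_zero, ZMod.card_unitClass_eq_one, ZMod.card] at h
    exact_mod_cast h
  rw [hshift, eval_charpoly_submatrix_eq_zero_iff _ _ (by contrapose! hx; linarith),
    eval_charpoly_closedAdjPattern_mul_diagonal, ZMod.card_unitClass_eq_zero,
    ZMod.card_unitClass_eq_one, show (#{z : ZMod n | z.unitClass = 2} : ℝ)
      = n - 1 - n.totient by linarith]
  constructor <;> intro h <;> linear_combination h

/-- For a composite number `n`, the adjacency spectral radius of the strong power graph of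
`ZMod n` (the largest root of the characteristic polynomial of its adjacency matrix) is
`(n-3+2cos(θ/3)√(n²-3φ(n)))/3`, where `0 < θ < π/2` and
`θ = arccos((2n³+27φ(n)²+27φ(n)-36nφ(n))/(2√((n²-3φ(n))³)))`. -/
theorem adjMatrixZ_spectralRadius (n : ℕ) [NeZero n] (hn : 2 ≤ n) (hnp : ¬ n.Prime)
    (θ : ℝ)
    (hθ : θ = Real.arccos ((2 * (n : ℝ) ^ 3 + 27 * (n.totient : ℝ) ^ 2 + 27 * (n.totient : ℝ)
        - 36 * (n : ℝ) * (n.totient : ℝ)) /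
      (2 * Real.sqrt (((n : ℝ) ^ 2 - 3 * (n.totient : ℝ)) ^ 3)))) :
    (0 < θ ∧ θ < Real.pi / 2) ∧
    IsGreatest {x : ℝ | (adjMatrixZ n).charpoly.eval x = 0}
      (((n : ℝ) - 3 + 2 * Real.cos (θ / 3) *
        Real.sqrt ((n : ℝ) ^ 2 - 3 * (n.totient : ℝ))) / 3) := by
  have hn1 : 1 < n := by omega
  have ht : (2 : ℝ) ≤ n.totient := by
    exact_mod_cast Nat.two_le_totient (lt_of_le_of_ne hn fun h => hnp (h ▸ Nat.prime_two))
  have htn : (n.totient : ℝ) ≤ n - 2 := by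
    rw [le_sub_iff_add_le]
    exact_mod_cast Nat.totient_add_two_le_of_not_prime hn1 hnp
  have hdisc := cubic_numerator_sq_lt ht htn
  have hD : 0 < (n : ℝ) ^ 2 - 3 * n.totient := by nlinarith
  have hθ_mem : 0 < θ ∧ θ < π / 2 := hθ ▸ arccos_cubic_ratio_mem_Ioo ht htn
  obtain ⟨hroot, hmax⟩ := isGreatest_depressed_cubic hD hdisc.le
  rw [← hθ, Set.mem_ofPred_eq] at hroot
  rw [← hθ] at hmax
  have hR : (-1 : ℝ) < ((n : ℝ) - 3 + 2 * cos (θ / 3) * √((n : ℝ) ^ 2 - 3 * n.totient)) / 3 := by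
    have hcos : 0 < cos (θ / 3) := cos_pos_of_mem_Ioo ⟨by linarith, by linarith⟩
    have : 0 < 2 * cos (θ / 3) * √((n : ℝ) ^ 2 - 3 * n.totient) := by positivity
    linarith
  refine ⟨hθ_mem, ?_, fun x hx => ?_⟩
  · rw [Set.mem_ofPred_eq, adjMatrixZ_eval_charpoly_eq_zero_iff hn1 hR.ne']
    linear_combination hroot / 27
  · rcases eq_or_ne x (-1) with rfl | hx1
    · exact hR.le
    rw [Set.mem_ofPred_eq, adjMatrixZ_eval_charpoly_eq_zero_iff hn1 hx1] at hx
    have := hmax (a := 3 * (x + 1) - n) (by rw [Set.mem_ofPred_eq]; linear_combination 27 * hx)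
    linarith
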